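/- arXiv:2312.01382 — 4 statements merged into one kernel-verified Lean document; each statement's English description precedes it below -/
import Mathlib

section
/- The set g̃ of all matrices ι(T,K,V,U) is a Lie subalgebra of gl(2(ν+r),ℝ): it is a real subspace closed under the matrix commutator [A,B] = AB − BA. -/
open Matrix

/-- The block-matrix embedding `ι(T,K,V,U) ∈ Mat_{2(ν+r)}(ℝ)`, with row/column block
sizes `(r, ν, r, ν)`:
`[[Re K, 0, −Im K, Re Vᵀ], [Im V, T, Re V, U], [Im K, 0, Re K, −Im Vᵀ], [0,0,0,−Tᵀ]]`. -/
def iota (ν r : ℕ) (T : Matrix (Fin ν) (Fin ν) ℝ) (K : Matrix (Fin r) (Fin r) ℂ)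
    (V : Matrix (Fin ν) (Fin r) ℂ) (U : Matrix (Fin ν) (Fin ν) ℝ) :
    Matrix ((Fin r ⊕ Fin ν) ⊕ (Fin r ⊕ Fin ν)) ((Fin r ⊕ Fin ν) ⊕ (Fin r ⊕ Fin ν)) ℝ :=
  Matrix.fromBlocks
    (Matrix.fromBlocks (K.map Complex.re) 0 (V.map Complex.im) T)
    (Matrix.fromBlocks (-(K.map Complex.im)) (Vᵀ.map Complex.re) (V.map Complex.re) U)
    (Matrix.fromBlocks (K.map Complex.im) 0 0 0)
    (Matrix.fromBlocks (K.map Complex.re) (-(Vᵀ.map Complex.im)) 0 (-Tᵀ))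

/-- The Lie algebra `g̃`: the set of all matrices `ι(T,K,V,U)` with
`T ∈ gl(ν,ℝ)`, `K ∈ u(r)` (skew-Hermitian), `V ∈ Mat_{ν,r}(ℂ)`, `U ∈ Sym_ν(ℝ)`. -/
def gtilde (ν r : ℕ) :
    Set (Matrix ((Fin r ⊕ Fin ν) ⊕ (Fin r ⊕ Fin ν)) ((Fin r ⊕ Fin ν) ⊕ (Fin r ⊕ Fin ν)) ℝ) :=
  {X | ∃ T K V U, Kᴴ = -K ∧ U.IsSymm ∧ X = iota ν r T K V U}

namespace Matrix

variable {l m n o α : Type*}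

lemma fromBlocks_sub [Sub α] (A A' : Matrix n l α) (B B' : Matrix n m α) (C C' : Matrix o l α)
    (D D' : Matrix o m α) :
    fromBlocks A B C D - fromBlocks A' B' C' D' =
      fromBlocks (A - A') (B - B') (C - C') (D - D') := by
  ext (_ | _) (_ | _) <;> rfl

lemma map_ofReal_re (A : Matrix m n ℝ) : (A.map Complex.ofReal).map Complex.re = A := by
  ext; simp

lemma map_ofReal_im (A : Matrix m n ℝ) : (A.map Complex.ofReal).map Complex.im = 0 := by
  ext; simp

lemma map_re_conjTranspose (A : Matrix m n ℂ) : Aᴴ.map Complex.re = (A.map Complex.re)ᵀ := by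
  ext; simp

lemma map_im_conjTranspose (A : Matrix m n ℂ) : Aᴴ.map Complex.im = -(A.map Complex.im)ᵀ := by
  ext; simp

lemma map_re_mul [Fintype m] (A : Matrix l m ℂ) (B : Matrix m n ℂ) :
    (A * B).map Complex.re =
      A.map Complex.re * B.map Complex.re - A.map Complex.im * B.map Complex.im := by
  ext; simp [mul_apply, Finset.sum_sub_distrib]

lemma map_im_mul [Fintype m] (A : Matrix l m ℂ) (B : Matrix m n ℂ) :
    (A * B).map Complex.im =
      A.map Complex.re * B.map Complex.im + A.map Complex.im * B.map Complex.re := by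
  ext; simp [mul_apply, Finset.sum_add_distrib]

lemma transpose_map_re_of_conjTranspose_eq_neg {K : Matrix n n ℂ} (hK : Kᴴ = -K) :
    (K.map Complex.re)ᵀ = -K.map Complex.re := by
  rw [← map_re_conjTranspose, hK]
  ext; simp

lemma transpose_map_im_of_conjTranspose_eq_neg {K : Matrix n n ℂ} (hK : Kᴴ = -K) :
    (K.map Complex.im)ᵀ = K.map Complex.im := by
  rw [← neg_neg (K.map Complex.im)ᵀ, ← map_im_conjTranspose, hK]
  ext; simp

end Matrix

theorem skewAdjoint.mul_sub_mul_mem {R : Type*} [Ring R] [StarRing R] {x y : R}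
    (hx : x ∈ skewAdjoint R) (hy : y ∈ skewAdjoint R) : x * y - y * x ∈ skewAdjoint R := by
  simp only [mem_iff, star_sub, star_mul, mem_iff.mp hx, mem_iff.mp hy, neg_mul_neg, neg_sub]

section iota

variable (ν r : ℕ)

lemma iota_zero : iota ν r 0 0 0 0 = 0 := by
  simp [iota]

lemma iota_add (T T' : Matrix (Fin ν) (Fin ν) ℝ) (K K' : Matrix (Fin r) (Fin r) ℂ)
    (V V' : Matrix (Fin ν) (Fin r) ℂ) (U U' : Matrix (Fin ν) (Fin ν) ℝ) :
    iota ν r T K V U + iota ν r T' K' V' U' = iota ν r (T + T') (K + K') (V + V') (U + U') := by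
  simp only [iota, fromBlocks_add, Matrix.map_add _ Complex.add_re,
    Matrix.map_add _ Complex.add_im, neg_add, add_zero, transpose_add]

lemma iota_smul (c : ℝ) (T : Matrix (Fin ν) (Fin ν) ℝ) (K : Matrix (Fin r) (Fin r) ℂ)
    (V : Matrix (Fin ν) (Fin r) ℂ) (U : Matrix (Fin ν) (Fin ν) ℝ) :
    c • iota ν r T K V U = iota ν r (c • T) (c • K) (c • V) (c • U) := by
  simp only [iota, fromBlocks_smul, Matrix.map_smul _ _ (Complex.smul_re c),
    Matrix.map_smul _ _ (Complex.smul_im c), smul_neg, smul_zero, transpose_smul]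

open Complex in
/-- Up to realification, `ι(T,K,V,U)` is the block matrix `[[K, 0, Vᴴ], [V, T, U], [0, 0, -Tᵀ]]`,
except that the `V`-row of one such matrix times the `Vᴴ`-column of another gives `Im (V Wᴴ)`;
this explains the shape of the commutator. `Kᴴ = -K` is what makes `(V L)ᴴ = -L Vᴴ`. -/
lemma iota_mul_sub_mul (T S U X : Matrix (Fin ν) (Fin ν) ℝ) {K L : Matrix (Fin r) (Fin r) ℂ}
    (V W : Matrix (Fin ν) (Fin r) ℂ) (hK : Kᴴ = -K) (hL : Lᴴ = -L) (hU : U.IsSymm)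
    (hX : X.IsSymm) :
    iota ν r T K V U * iota ν r S L W X - iota ν r S L W X * iota ν r T K V U =
      iota ν r (T * S - S * T) (K * L - L * K)
        (T.map ofReal * W - S.map ofReal * V + V * L - W * K)
        ((V * Wᴴ).map im + ((V * Wᴴ).map im)ᵀ + (T * X + (T * X)ᵀ) - (S * U + (S * U)ᵀ)) := by
  simp only [iota, fromBlocks_multiply, fromBlocks_add, fromBlocks_sub, fromBlocks_inj,
    Matrix.zero_mul, Matrix.mul_zero, add_zero, zero_add, sub_zero, transpose_zero,
    Matrix.neg_mul, Matrix.mul_neg, neg_neg, neg_sub, and_true, true_and, transpose_map,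
    transpose_add, transpose_sub, transpose_mul, transpose_neg, transpose_transpose, hU.eq, hX.eq,
    Matrix.map_add _ add_re, Matrix.map_sub _ sub_re, Matrix.map_add _ add_im,
    Matrix.map_sub _ sub_im, map_re_mul, map_im_mul, map_ofReal_re, map_ofReal_im,
    map_re_conjTranspose, map_im_conjTranspose,
    transpose_map_re_of_conjTranspose_eq_neg hK, transpose_map_im_of_conjTranspose_eq_neg hK,
    transpose_map_re_of_conjTranspose_eq_neg hL, transpose_map_im_of_conjTranspose_eq_neg hL]
  repeat' apply And.intro
  all_goals abel

end iota

def gtildeSubmodule (ν r : ℕ) :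
    Submodule ℝ
      (Matrix ((Fin r ⊕ Fin ν) ⊕ (Fin r ⊕ Fin ν)) ((Fin r ⊕ Fin ν) ⊕ (Fin r ⊕ Fin ν)) ℝ) where
  carrier := gtilde ν r
  zero_mem' := ⟨0, 0, 0, 0, (skewAdjoint _).zero_mem, isSymm_zero, (iota_zero ν r).symm⟩
  add_mem' := by
    rintro _ _ ⟨T, K, V, U, hK, hU, rfl⟩ ⟨T', K', V', U', hK', hU', rfl⟩
    exact ⟨T + T', K + K', V + V', U + U', (skewAdjoint _).add_mem hK hK', hU.add hU',
      iota_add ν r T T' K K' V V' U U'⟩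
  smul_mem' := by
    rintro c _ ⟨T, K, V, U, hK, hU, rfl⟩
    exact ⟨c • T, c • K, c • V, c • U, skewAdjoint.smul_mem c hK, hU.smul c,
      iota_smul ν r c T K V U⟩

lemma mul_sub_mul_mem_gtilde {ν r : ℕ} {A B} (hA : A ∈ gtilde ν r) (hB : B ∈ gtilde ν r) :
    A * B - B * A ∈ gtilde ν r := by
  obtain ⟨T, K, V, U, hK, hU, rfl⟩ := hA
  obtain ⟨S, L, W, X, hL, hX, rfl⟩ := hB
  rw [iota_mul_sub_mul ν r T S U X V W hK hL hU hX]
  exact ⟨_, _, _, _, skewAdjoint.mul_sub_mul_mem hK hL,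
    ((isSymm_add_transpose_self _).add (isSymm_add_transpose_self _)).sub
      (isSymm_add_transpose_self _), rfl⟩

theorem gtilde_isLieSubalgebra_general (ν r : ℕ) :
    ∃ S : Submodule ℝ
        (Matrix ((Fin r ⊕ Fin ν) ⊕ (Fin r ⊕ Fin ν)) ((Fin r ⊕ Fin ν) ⊕ (Fin r ⊕ Fin ν)) ℝ),
      (S : Set _) = gtilde ν r ∧
      ∀ X ∈ gtilde ν r, ∀ Y ∈ gtilde ν r, X * Y - Y * X ∈ gtilde ν r :=
  ⟨gtildeSubmodule ν r, rfl, fun _ hX _ hY => mul_sub_mul_mem_gtilde hX hY⟩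

/-- `g̃` is a Lie subalgebra of `gl(2(ν+r),ℝ)`: a real subspace closed
under the matrix commutator `[A,B] = AB − BA`. -/
theorem gtilde_isLieSubalgebra (ν r : ℕ) (hν : 0 < ν) (hr : 0 < r) :
    ∃ S : Submodule ℝ
        (Matrix ((Fin r ⊕ Fin ν) ⊕ (Fin r ⊕ Fin ν)) ((Fin r ⊕ Fin ν) ⊕ (Fin r ⊕ Fin ν)) ℝ),
      (S : Set _) = gtilde ν r ∧
      ∀ X ∈ gtilde ν r, ∀ Y ∈ gtilde ν r, X * Y - Y * X ∈ gtilde ν r :=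
  gtilde_isLieSubalgebra_general ν r
end

section
/- For ν ≥ 3 and r ≥ 2, the center of the Lie algebra g̃ is trivial: if X ∈ g̃ satisfies [X,Y] = 0 for all Y ∈ g̃, then X = 0. -/
/-! A central `X = ι(T,K,V,U)` is killed component by component by bracketing with three
families in `g̃`: the grading element `ι(1,0,0,0)` gives `⁅X, ι(1,0,0,0)⁆ = ι(0,0,-V,-2U)`,
so `V = U = 0`; then `⁅X, ι(0,0,0,S)⁆ = ι(0,0,0,TS + STᵀ)` for all symmetric `S` forces `T = 0`;
finally, `K` being skew-Hermitian, `⁅ι(0,K,0,0), ι(0,0,W,0)⁆ = ι(0,0,-WK,0)` for all `W`,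
which forces `K = 0` as soon as `ν ≥ 1`. -/

open Matrix

namespace Matrix

variable {m n p R : Type*} [Fintype n] [DecidableEq n]

theorem eq_zero_of_forall_isSymm_mul_add_mul_transpose_eq_zero [NonAssocSemiring R]
    [NoZeroDivisors R] [CharZero R] {T : Matrix n n R}
    (h : ∀ S : Matrix n n R, S.IsSymm → T * S + S * Tᵀ = 0) : T = 0 := by
  ext i a
  have hS := congrFun₂ (h (single a a 1) (by simp [IsSymm])) i a
  by_cases hia : i = a
  · subst hia
    simpa using hS
  · simpa [hia] using hS

theorem eq_zero_of_forall_mul_eq_zero [DecidableEq m] [Nonempty m] [Semiring R]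
    {K : Matrix n p R} (h : ∀ W : Matrix m n R, W * K = 0) : K = 0 := by
  ext a b
  obtain ⟨i⟩ := ‹Nonempty m›
  simpa using congrFun₂ (h (single i a 1)) i b

end Matrix

variable {ν r : ℕ}

theorem iota_eq_zero_iff {T : Matrix (Fin ν) (Fin ν) ℝ} {K : Matrix (Fin r) (Fin r) ℂ}
    {V : Matrix (Fin ν) (Fin r) ℂ} {U : Matrix (Fin ν) (Fin ν) ℝ} :
    iota ν r T K V U = 0 ↔ T = 0 ∧ K = 0 ∧ V = 0 ∧ U = 0 := by
  simp only [iota, ← fromBlocks_zero, fromBlocks_inj]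
  constructor
  · rintro ⟨⟨hKre, -, hVim, hT⟩, ⟨hKim, -, hVre, hU⟩, -⟩
    refine ⟨hT, ?_, ?_, hU⟩ <;> ext i j <;> apply Complex.ext
    · exact congrFun₂ hKre i j
    · simpa using congrFun₂ hKim i j
    · exact congrFun₂ hVre i j
    · exact congrFun₂ hVim i j
  · rintro ⟨rfl, rfl, rfl, rfl⟩
    simp

theorem iota_lie_iota_one (T K V U) :
    ⁅iota ν r T K V U, iota ν r 1 0 0 0⁆ = iota ν r 0 0 (-V) ((-2 : ℝ) • U) := by
  rw [Ring.lie_def]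
  ext ((i | i) | (i | i)) ((j | j) | (j | j)) <;>
    simp [iota, mul_apply, Fintype.sum_sum_type, one_apply]
  all_goals ring

theorem iota_lie_iota_zero_zero_zero (T K V U S) :
    ⁅iota ν r T K V U, iota ν r 0 0 0 S⁆ = iota ν r 0 0 0 (T * S + S * Tᵀ) := by
  rw [Ring.lie_def]
  ext ((i | i) | (i | i)) ((j | j) | (j | j)) <;>
    simp [iota, mul_apply, Fintype.sum_sum_type]

theorem iota_lie_iota_of_skewHermitian {K : Matrix (Fin r) (Fin r) ℂ} (hK : Kᴴ = -K) (W) :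
    ⁅iota ν r 0 K 0 0, iota ν r 0 0 W 0⁆ = iota ν r 0 0 (-(W * K)) 0 := by
  have hKab (a b : Fin r) : star (K b a) = -K a b := congrFun₂ hK a b
  have hre (a b : Fin r) : (K b a).re = -(K a b).re := by
    simpa using congrArg Complex.re (hKab a b)
  have him (a b : Fin r) : (K b a).im = (K a b).im := by
    simpa using congrArg Complex.im (hKab a b)
  rw [Ring.lie_def]
  ext ((i | i) | (i | i)) ((j | j) | (j | j)) <;>
    simp [iota, mul_apply, Fintype.sum_sum_type, Finset.sum_add_distrib]
  all_goals (try simp only [hre i, him i, neg_mul, Finset.sum_neg_distrib]); ring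

theorem gtilde_center_trivial_general (ν r : ℕ) (hν : 3 ≤ ν) :
    ∀ X ∈ gtilde ν r, (∀ Y ∈ gtilde ν r, X * Y - Y * X = 0) → X = 0 := by
  rintro X ⟨T, K, V, U, hK, -, rfl⟩ hX
  simp only [← Ring.lie_def] at hX
  obtain ⟨rfl, rfl⟩ : V = 0 ∧ U = 0 := by
    have h := hX _ ⟨1, 0, 0, 0, by simp, by simp [IsSymm], rfl⟩
    rw [iota_lie_iota_one, iota_eq_zero_iff] at h
    simpa using h
  obtain rfl : T = 0 := by
    refine eq_zero_of_forall_isSymm_mul_add_mul_transpose_eq_zero fun S hS => ?_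
    have h := hX _ ⟨0, 0, 0, S, by simp, hS, rfl⟩
    rw [iota_lie_iota_zero_zero_zero, iota_eq_zero_iff] at h
    exact h.2.2.2
  obtain rfl : K = 0 := by
    have : Nonempty (Fin ν) := ⟨⟨0, by omega⟩⟩
    refine eq_zero_of_forall_mul_eq_zero (m := Fin ν) fun W => ?_
    have h := hX _ ⟨0, 0, W, 0, by simp, by simp [IsSymm], rfl⟩
    rw [iota_lie_iota_of_skewHermitian hK, iota_eq_zero_iff] at h
    simpa using h
  exact iota_eq_zero_iff.2 ⟨rfl, rfl, rfl, rfl⟩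

/-- for `ν ≥ 3` and `r ≥ 2` the center of `g̃` is trivial. -/
theorem gtilde_center_trivial (ν r : ℕ) (hν : 3 ≤ ν) (hr : 2 ≤ r) :
    ∀ X ∈ gtilde ν r, (∀ Y ∈ gtilde ν r, X * Y - Y * X = 0) → X = 0 :=
  gtilde_center_trivial_general ν r hν
end

section
/- The map φ₀ : g̃ → g̃ defined by φ₀(ι(T,K,V,U)) := ι(T, conj(K), conj(V), −U) is a well-defined Lie algebra automorphism of g̃ and is an involution: φ₀ ∘ φ₀ = id. -/
open Matrix

/-!
`φ₀` is conjugation by the sign matrix `J = diag(1, -1, -1, 1)` (blocks of sizes `r, ν, r, ν`):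
conjugating `ι(T,K,V,U)` by `J` flips the signs of exactly the blocks `Im K`, `Im V` and `U`,
which is `ι(T, conj K, conj V, -U)`. Being an inner automorphism of the matrix algebra it is
linear and multiplicative, hence preserves commutators, and since `J² = 1` it is an involution.
It maps `g̃` into itself because `conj K` is again skew-Hermitian and `-U` symmetric.
-/

section InvolutiveConj

variable (R : Type*) {A : Type*} [CommSemiring R] [Semiring A] [Algebra R A]

def conjByInvolution (J : A) (hJ : J * J = 1) : A ≃ₐ[R] A :=
  MulSemiringAction.toAlgEquiv R A (ConjAct.toConjAct (⟨J, J, hJ, hJ⟩ : Aˣ))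

variable {R} {J : A} (hJ : J * J = 1)

lemma conjByInvolution_apply (X : A) : conjByInvolution R J hJ X = J * X * J := rfl

lemma conjByInvolution_involutive : Function.Involutive (conjByInvolution R J hJ) := by
  intro X
  simp only [conjByInvolution_apply, ← mul_assoc, hJ, one_mul]
  rw [mul_assoc, hJ, mul_one]

end InvolutiveConj

lemma Matrix.conjTranspose_map_star_eq_neg_of_conjTranspose_eq_neg {n α : Type*} [Ring α] [StarRing α]
    {K : Matrix n n α} (hK : Kᴴ = -K) : (K.map star)ᴴ = -K.map star := by
  ext i j
  have := congrFun (congrFun hK j) i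
  simp_all

lemma Matrix.map_conj_map_re {m n : Type*} (A : Matrix m n ℂ) :
    (A.map (starRingEnd ℂ)).map Complex.re = A.map Complex.re := by
  ext; simp

lemma Matrix.map_conj_map_im {m n : Type*} (A : Matrix m n ℂ) :
    (A.map (starRingEnd ℂ)).map Complex.im = -A.map Complex.im := by
  ext; simp

def iotaSign (ν r : ℕ) :
    Matrix ((Fin r ⊕ Fin ν) ⊕ (Fin r ⊕ Fin ν)) ((Fin r ⊕ Fin ν) ⊕ (Fin r ⊕ Fin ν)) ℝ :=
  fromBlocks (fromBlocks 1 0 0 (-1)) 0 0 (fromBlocks (-1) 0 0 1)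

lemma iotaSign_mul_self (ν r : ℕ) : iotaSign ν r * iotaSign ν r = 1 := by
  simp [iotaSign, fromBlocks_multiply, ← fromBlocks_one]

lemma iotaSign_mul_iota_mul_iotaSign (ν r : ℕ) (T : Matrix (Fin ν) (Fin ν) ℝ)
    (K : Matrix (Fin r) (Fin r) ℂ) (V : Matrix (Fin ν) (Fin r) ℂ) (U : Matrix (Fin ν) (Fin ν) ℝ) :
    iotaSign ν r * iota ν r T K V U * iotaSign ν r =
      iota ν r T (K.map (starRingEnd ℂ)) (V.map (starRingEnd ℂ)) (-U) := by
  simp only [iota, ← Matrix.transpose_map, Matrix.map_conj_map_re, Matrix.map_conj_map_im]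
  simp [iotaSign, fromBlocks_multiply]

lemma iota_map_conj_mem_gtilde {ν r : ℕ} (T : Matrix (Fin ν) (Fin ν) ℝ)
    {K : Matrix (Fin r) (Fin r) ℂ} (V : Matrix (Fin ν) (Fin r) ℂ) {U : Matrix (Fin ν) (Fin ν) ℝ}
    (hK : Kᴴ = -K) (hU : U.IsSymm) :
    iota ν r T (K.map (starRingEnd ℂ)) (V.map (starRingEnd ℂ)) (-U) ∈ gtilde ν r :=
  ⟨T, _, _, -U, Matrix.conjTranspose_map_star_eq_neg_of_conjTranspose_eq_neg hK, hU.neg, rfl⟩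

lemma mapsTo_conjByInvolution_iotaSign (ν r : ℕ) :
    Set.MapsTo (conjByInvolution ℝ (iotaSign ν r) (iotaSign_mul_self ν r)) (gtilde ν r)
      (gtilde ν r) := by
  rintro _ ⟨T, K, V, U, hK, hU, rfl⟩
  rw [conjByInvolution_apply, iotaSign_mul_iota_mul_iotaSign]
  exact iota_map_conj_mem_gtilde T V hK hU

theorem phi0_automorphism_general (ν r : ℕ) :
    ∃ φ : Matrix ((Fin r ⊕ Fin ν) ⊕ (Fin r ⊕ Fin ν)) ((Fin r ⊕ Fin ν) ⊕ (Fin r ⊕ Fin ν)) ℝ →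
        Matrix ((Fin r ⊕ Fin ν) ⊕ (Fin r ⊕ Fin ν)) ((Fin r ⊕ Fin ν) ⊕ (Fin r ⊕ Fin ν)) ℝ,
      (∀ (T : Matrix (Fin ν) (Fin ν) ℝ) (K : Matrix (Fin r) (Fin r) ℂ)
          (V : Matrix (Fin ν) (Fin r) ℂ) (U : Matrix (Fin ν) (Fin ν) ℝ),
        Kᴴ = -K → U.IsSymm →
        φ (iota ν r T K V U) =
          iota ν r T (K.map (starRingEnd ℂ)) (V.map (starRingEnd ℂ)) (-U)) ∧
      (∀ X ∈ gtilde ν r, φ X ∈ gtilde ν r) ∧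
      Set.BijOn φ (gtilde ν r) (gtilde ν r) ∧
      (∀ X ∈ gtilde ν r, ∀ Y ∈ gtilde ν r, φ (X + Y) = φ X + φ Y) ∧
      (∀ (c : ℝ), ∀ X ∈ gtilde ν r, φ (c • X) = c • φ X) ∧
      (∀ X ∈ gtilde ν r, ∀ Y ∈ gtilde ν r,
        φ (X * Y - Y * X) = φ X * φ Y - φ Y * φ X) ∧
      (∀ X ∈ gtilde ν r, φ (φ X) = X) := by
  set φ := conjByInvolution ℝ (iotaSign ν r) (iotaSign_mul_self ν r)
  have hφ : Function.Involutive φ := conjByInvolution_involutive _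
  have hmaps : Set.MapsTo φ (gtilde ν r) (gtilde ν r) := mapsTo_conjByInvolution_iotaSign ν r
  refine ⟨φ, fun T K V U _ _ => iotaSign_mul_iota_mul_iotaSign ν r T K V U, hmaps,
    Set.InvOn.bijOn ⟨fun X _ => hφ X, fun X _ => hφ X⟩ hmaps hmaps,
    fun X _ Y _ => map_add φ X Y, fun c X _ => map_smul φ c X,
    fun X _ Y _ => by simp only [map_sub, map_mul], fun X _ => hφ X⟩

/-- the assignment `φ₀(ι(T,K,V,U)) := ι(T, conj K, conj V, −U)` gives a
well-defined Lie algebra automorphism of `g̃` which is an involution. -/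
theorem phi0_automorphism (ν r : ℕ) (hν : 0 < ν) (hr : 0 < r) :
    ∃ φ : Matrix ((Fin r ⊕ Fin ν) ⊕ (Fin r ⊕ Fin ν)) ((Fin r ⊕ Fin ν) ⊕ (Fin r ⊕ Fin ν)) ℝ →
        Matrix ((Fin r ⊕ Fin ν) ⊕ (Fin r ⊕ Fin ν)) ((Fin r ⊕ Fin ν) ⊕ (Fin r ⊕ Fin ν)) ℝ,
      (∀ (T : Matrix (Fin ν) (Fin ν) ℝ) (K : Matrix (Fin r) (Fin r) ℂ)
          (V : Matrix (Fin ν) (Fin r) ℂ) (U : Matrix (Fin ν) (Fin ν) ℝ),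
        Kᴴ = -K → U.IsSymm →
        φ (iota ν r T K V U) =
          iota ν r T (K.map (starRingEnd ℂ)) (V.map (starRingEnd ℂ)) (-U)) ∧
      (∀ X ∈ gtilde ν r, φ X ∈ gtilde ν r) ∧
      Set.BijOn φ (gtilde ν r) (gtilde ν r) ∧
      (∀ X ∈ gtilde ν r, ∀ Y ∈ gtilde ν r, φ (X + Y) = φ X + φ Y) ∧
      (∀ (c : ℝ), ∀ X ∈ gtilde ν r, φ (c • X) = c • φ X) ∧
      (∀ X ∈ gtilde ν r, ∀ Y ∈ gtilde ν r,
        φ (X * Y - Y * X) = φ X * φ Y - φ Y * φ X) ∧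
      (∀ X ∈ gtilde ν r, φ (φ X) = X) :=
  phi0_automorphism_general ν r
end

section
/- For all (Z,V), (Z',V') ∈ 𝒟, the matrix M := (Z − conj(Z'))/(2i) − Q(V,V') ∈ Mat_ν(ℂ) satisfies M + M* = (Im Z − Q(V,V)) + (Im Z' − Q(V',V')) + Q(V−V', V−V'), where M* denotes the conjugate transpose of M; in particular M + M* is positive definite Hermitian and M is invertible. -/
/-!
Since `Z` and `Z'` are symmetric, `Mᴴ = (Z' − conj Z)/(2i) − Q(V',V)`, and the identity follows
from `(Z − conj Z)/(2i) = Im Z` and the bilinear expansion of `Q(V − V', V − V')`.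
Writing `Q(W,W) = (W Wᴴ + (W Wᴴ)ᵀ)/4` shows that `Q(W,W)` is real and positive semidefinite,
so `M + Mᴴ` is positive definite, being the sum of two real positive-definite matrices and a
positive semidefinite one. Finally `M v = 0` forces `v* (M + Mᴴ) v = 0`, so `M` is invertible.
-/

open Matrix
open scoped ComplexOrder

/-- The Hermitian map `Q(U,V) := (U·conj(Vᵀ) + conj(V)·Uᵀ)/4`. -/
noncomputable def Qmap (ν r : ℕ) (U V : Matrix (Fin ν) (Fin r) ℂ) :
    Matrix (Fin ν) (Fin ν) ℂ :=
  (4 : ℂ)⁻¹ • (U * (V.map (starRingEnd ℂ))ᵀ + V.map (starRingEnd ℂ) * Uᵀ)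

/-- The Siegel domain `𝒟 ⊂ Sym_ν(ℂ) × Mat_{ν,r}(ℂ)`, realized inside the full matrix
space; membership includes the symmetry of `Z` and `Im Z − Q(V,V) ∈ Ω`, where `Ω`
is the cone of positive-definite real symmetric matrices. -/
noncomputable def SiegelD (ν r : ℕ) :
    Set (Matrix (Fin ν) (Fin ν) ℂ × Matrix (Fin ν) (Fin r) ℂ) :=
  {p | p.1.IsSymm ∧
    ((p.1.map Complex.im) - (Qmap ν r p.2 p.2).map Complex.re).PosDef}

namespace Matrix

variable {n : Type*}

lemma IsSymm.conjTranspose_eq {A : Matrix n n ℂ} (hA : A.IsSymm) :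
    Aᴴ = A.map (starRingEnd ℂ) := by
  ext i j
  simp [hA.apply i j]

lemma map_re_map_ofReal_of_isSymm_of_isHermitian {A : Matrix n n ℂ} (hS : A.IsSymm)
    (hH : A.IsHermitian) : (A.map Complex.re).map ((↑) : ℝ → ℂ) = A := by
  ext i j
  have := hH.apply i j
  rw [hS.apply i j] at this
  simpa using Complex.conj_eq_iff_re.mp this

lemma map_im_map_ofReal (Z : Matrix n n ℂ) :
    (Z.map Complex.im).map ((↑) : ℝ → ℂ) = (2 * Complex.I)⁻¹ • (Z - Z.map (starRingEnd ℂ)) := by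
  ext i j
  simp only [map_apply, Matrix.smul_apply, Matrix.sub_apply, smul_eq_mul, Complex.sub_conj]
  field_simp
  push_cast
  ring

variable [Fintype n]

lemma isUnit_of_posDef_add_conjTranspose {K : Type*} [Field K] [PartialOrder K] [StarRing K]
    [DecidableEq n] {M : Matrix n n K} (hM : (M + Mᴴ).PosDef) : IsUnit M := by
  by_contra h
  obtain ⟨a, ha, ha2⟩ : ∃ a ≠ 0, M *ᵥ a = 0 := by
    obtain ⟨a, b, ha⟩ := Function.not_injective_iff.mp <| mulVec_injective_iff_isUnit.not.mpr h
    exact ⟨a - b, by simp [sub_eq_zero, ha, mulVec_sub]⟩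
  have := hM.dotProduct_mulVec_pos ha
  rw [add_mulVec, dotProduct_add, ha2, dotProduct_mulVec _ Mᴴ, ← star_mulVec, ha2] at this
  simp at this

open scoped MatrixOrder in
lemma PosSemidef.map_ofReal {R : Matrix n n ℝ} (hR : R.PosSemidef) :
    (R.map ((↑) : ℝ → ℂ)).PosSemidef := by
  classical
  obtain ⟨B, rfl⟩ := CStarAlgebra.nonneg_iff_eq_star_mul_self.mp hR.nonneg
  convert posSemidef_conjTranspose_mul_self (B.map ((↑) : ℝ → ℂ)) using 1
  ext i j
  simp [mul_apply]

lemma PosDef.map_ofReal [DecidableEq n] {R : Matrix n n ℝ} (hR : R.PosDef) :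
    (R.map ((↑) : ℝ → ℂ)).PosDef := by
  refine hR.posSemidef.map_ofReal.posDef_iff_det_ne_zero.mpr ?_
  change (Complex.ofRealHom.mapMatrix R).det ≠ 0
  rw [← Complex.ofRealHom.map_det R]
  exact (map_ne_zero _).mpr hR.det_pos.ne'

end Matrix

section Qmap

variable {ν r : ℕ}

lemma Qmap_eq (U W : Matrix (Fin ν) (Fin r) ℂ) :
    Qmap ν r U W = (4 : ℂ)⁻¹ • (U * Wᴴ + (U * Wᴴ)ᵀ) := by
  rw [Qmap, transpose_mul]; rfl

lemma Qmap_conjTranspose (U W : Matrix (Fin ν) (Fin r) ℂ) :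
    (Qmap ν r U W)ᴴ = Qmap ν r W U := by
  simp only [Qmap_eq, conjTranspose_smul, conjTranspose_add,
    conjTranspose_transpose_eq_transpose_conjTranspose, conjTranspose_mul,
    conjTranspose_conjTranspose]
  norm_num

lemma Qmap_self_isSymm (V : Matrix (Fin ν) (Fin r) ℂ) : (Qmap ν r V V).IsSymm := by
  simp [Qmap_eq, IsSymm, add_comm]

lemma Qmap_self_map_re (V : Matrix (Fin ν) (Fin r) ℂ) :
    ((Qmap ν r V V).map Complex.re).map ((↑) : ℝ → ℂ) = Qmap ν r V V :=
  map_re_map_ofReal_of_isSymm_of_isHermitian (Qmap_self_isSymm V) (Qmap_conjTranspose V V)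

lemma Qmap_self_posSemidef (V : Matrix (Fin ν) (Fin r) ℂ) : (Qmap ν r V V).PosSemidef := by
  rw [Qmap_eq]
  refine .smul ?_ (by rw [Complex.le_def]; norm_num)
  exact (posSemidef_self_mul_conjTranspose V).add (posSemidef_self_mul_conjTranspose V).transpose

lemma Qmap_sub_sub (V V' : Matrix (Fin ν) (Fin r) ℂ) :
    Qmap ν r (V - V') (V - V') =
      Qmap ν r V V + Qmap ν r V' V' - Qmap ν r V V' - Qmap ν r V' V := by
  simp only [Qmap_eq, conjTranspose_sub, Matrix.sub_mul, Matrix.mul_sub, transpose_sub]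
  module

lemma map_ofReal_im_sub_Qmap_re (Z : Matrix (Fin ν) (Fin ν) ℂ) (V : Matrix (Fin ν) (Fin r) ℂ) :
    (Z.map Complex.im - (Qmap ν r V V).map Complex.re).map ((↑) : ℝ → ℂ) =
      (2 * Complex.I)⁻¹ • (Z - Z.map (starRingEnd ℂ)) - Qmap ν r V V := by
  rw [Matrix.map_sub _ Complex.ofReal_sub, map_im_map_ofReal, Qmap_self_map_re]

lemma siegelKernel_add_conjTranspose {Z Z' M : Matrix (Fin ν) (Fin ν) ℂ} (hZ : Z.IsSymm)
    (hZ' : Z'.IsSymm) {V V' : Matrix (Fin ν) (Fin r) ℂ}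
    (hM : M = (2 * Complex.I)⁻¹ • (Z - Z'.map (starRingEnd ℂ)) - Qmap ν r V V') :
    M + Mᴴ = ((2 * Complex.I)⁻¹ • (Z - Z.map (starRingEnd ℂ)) - Qmap ν r V V) +
      ((2 * Complex.I)⁻¹ • (Z' - Z'.map (starRingEnd ℂ)) - Qmap ν r V' V') +
      Qmap ν r (V - V') (V - V') := by
  have hc : star (2 * Complex.I)⁻¹ = -(2 * Complex.I)⁻¹ := by simp
  rw [hM, ← hZ.conjTranspose_eq, ← hZ'.conjTranspose_eq]
  simp only [conjTranspose_sub, conjTranspose_smul, conjTranspose_conjTranspose, hc,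
    Qmap_conjTranspose, Qmap_sub_sub]
  module

end Qmap

theorem siegel_kernel_matrix_invertible_general (ν r : ℕ)
    (Z Z' : Matrix (Fin ν) (Fin ν) ℂ) (V V' : Matrix (Fin ν) (Fin r) ℂ)
    (hZV : (Z, V) ∈ SiegelD ν r) (hZV' : (Z', V') ∈ SiegelD ν r) :
    ∀ M : Matrix (Fin ν) (Fin ν) ℂ,
      M = (2 * Complex.I)⁻¹ • (Z - Z'.map (starRingEnd ℂ)) - Qmap ν r V V' →
      (M + Mᴴ =
          (((Z.map Complex.im) - (Qmap ν r V V).map Complex.re) +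
            ((Z'.map Complex.im) - (Qmap ν r V' V').map Complex.re)).map
              (fun x => (x : ℂ)) +
            Qmap ν r (V - V') (V - V') ∧
        (M + Mᴴ).PosDef ∧
        IsUnit M) := by
  intro M hM
  obtain ⟨hZ, hY⟩ := hZV
  obtain ⟨hZ', hY'⟩ := hZV'
  have heq := siegelKernel_add_conjTranspose hZ hZ' hM
  rw [← map_ofReal_im_sub_Qmap_re, ← map_ofReal_im_sub_Qmap_re,
    ← Matrix.map_add _ Complex.ofReal_add] at heq
  have hpos : (M + Mᴴ).PosDef := by
    rw [heq, Matrix.map_add _ Complex.ofReal_add]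
    exact (hY.map_ofReal.add hY'.map_ofReal).add_posSemidef (Qmap_self_posSemidef (V - V'))
  exact ⟨heq, hpos, isUnit_of_posDef_add_conjTranspose hpos⟩

/-- for `(Z,V), (Z',V') ∈ 𝒟` and `M := (Z − conj Z')/(2i) − Q(V,V')`,
one has `M + M* = (Im Z − Q(V,V)) + (Im Z' − Q(V',V')) + Q(V−V', V−V')`; in particular
`M + M*` is positive definite (Hermitian) and `M` is invertible. -/
theorem siegel_kernel_matrix_invertible (ν r : ℕ) (hν : 0 < ν) (hr : 0 < r)
    (Z Z' : Matrix (Fin ν) (Fin ν) ℂ) (V V' : Matrix (Fin ν) (Fin r) ℂ)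
    (hZV : (Z, V) ∈ SiegelD ν r) (hZV' : (Z', V') ∈ SiegelD ν r) :
    ∀ M : Matrix (Fin ν) (Fin ν) ℂ,
      M = (2 * Complex.I)⁻¹ • (Z - Z'.map (starRingEnd ℂ)) - Qmap ν r V V' →
      (M + Mᴴ =
          (((Z.map Complex.im) - (Qmap ν r V V).map Complex.re) +
            ((Z'.map Complex.im) - (Qmap ν r V' V').map Complex.re)).map
              (fun x => (x : ℂ)) +
            Qmap ν r (V - V') (V - V') ∧
        (M + Mᴴ).PosDef ∧
        IsUnit M) :=
  siegel_kernel_matrix_invertible_general ν r Z Z' V V' hZV hZV'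
end
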